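/- arXiv:2202.03461 — 10 statements merged into one kernel-verified Lean document; each statement's English description precedes it below -/
import Mathlib

section
/- If k and k' are integers with k ≥ 6 and k' ≥ 6 such that T(k) = T(k'), then k ≡ k' (mod 4). -/
/-- The sequence `a` defined by `a 0 = 1`, `a 1 = -1`,
`a n = -3 * a (n-1) - 4 * a (n-2)` for `n ≥ 2`. -/
def a : ℕ → ℤ
  | 0 => 1
  | 1 => -1
  | n + 2 => -3 * a (n + 1) - 4 * a n

/-- The trace of the Hecke operator `T₂` on cusp forms of weight `2k` and level one,
expressed via the sequence `a` (for `k ≥ 2`). -/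
def T (k : ℕ) : ℤ :=
  if k % 4 = 0 then -a (k - 1) - 1 + 2 ^ (k - 1)
  else if k % 4 = 1 then -a (k - 1) - 1 - 2 ^ (k - 1)
  else -a (k - 1) - 1

lemma a_rec (n : ℕ) : a (n + 2) = -3 * a (n + 1) - 4 * a n := rfl

lemma a_mod' (m : ℕ) : a (4*m+5) % 32 = 23 ∧ a (4*m+6) % 32 = 31 ∧
    a (4*m+7) % 32 = 7 ∧ a (4*m+8) % 32 = 15 := by
  induction m with
  | zero => refine ⟨?_, ?_, ?_, ?_⟩ <;> simp [a_rec, a]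
  | succ m ih =>
    obtain ⟨h5, h6, h7, h8⟩ := ih
    have h9 : a (4*m+9) % 32 = 23 := by
      rw [show 4*m+9 = 4*m+7+2 from by omega, a_rec,
        show 4*m+7+1 = 4*m+8 from by omega]
      omega
    have h10 : a (4*m+10) % 32 = 31 := by
      rw [show 4*m+10 = 4*m+8+2 from by omega, a_rec,
        show 4*m+8+1 = 4*m+9 from by omega]
      omega
    have h11 : a (4*m+11) % 32 = 7 := by
      rw [show 4*m+11 = 4*m+9+2 from by omega, a_rec,
        show 4*m+9+1 = 4*m+10 from by omega]
      omega
    have h12 : a (4*m+12) % 32 = 15 := by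
      rw [show 4*m+12 = 4*m+10+2 from by omega, a_rec,
        show 4*m+10+1 = 4*m+11 from by omega]
      omega
    refine ⟨?_, ?_, ?_, ?_⟩
    · rw [show 4*(m+1)+5 = 4*m+9 from by omega]; exact h9
    · rw [show 4*(m+1)+6 = 4*m+10 from by omega]; exact h10
    · rw [show 4*(m+1)+7 = 4*m+11 from by omega]; exact h11
    · rw [show 4*(m+1)+8 = 4*m+12 from by omega]; exact h12

lemma T_mod (k : ℕ) (hk : 6 ≤ k) : T k % 32 = 24 - 8 * ((k % 4 : ℕ) : ℤ) := by
  obtain ⟨m, hm⟩ : ∃ m, k = 4*m+6 ∨ k = 4*m+7 ∨ k = 4*m+8 ∨ k = 4*m+9 :=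
    ⟨(k - 6) / 4, by omega⟩
  have hpow : (32 : ℤ) ∣ 2 ^ (k - 1) := by
    have : (2:ℤ)^5 ∣ 2^(k-1) := pow_dvd_pow 2 (by omega)
    norm_num at this
    exact_mod_cast this
  obtain ⟨c, hc⟩ := hpow
  rcases hm with rfl | rfl | rfl | rfl
  · have h5 := (a_mod' m).1
    have hmod : (4*m+6) % 4 = 2 := by omega
    rw [T, if_neg (by omega), if_neg (by omega),
      show 4*m+6-1 = 4*m+5 from by omega]
    omega
  · have h6 := (a_mod' m).2.1
    have hmod : (4*m+7) % 4 = 3 := by omega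
    rw [T, if_neg (by omega), if_neg (by omega),
      show 4*m+7-1 = 4*m+6 from by omega]
    omega
  · have h7 := (a_mod' m).2.2.1
    have hmod : (4*m+8) % 4 = 0 := by omega
    rw [show 4*m+8-1 = 4*m+7 from by omega] at hc
    rw [T, if_pos (by omega), show 4*m+8-1 = 4*m+7 from by omega]
    omega
  · have h8 := (a_mod' m).2.2.2
    have hmod : (4*m+9) % 4 = 1 := by omega
    rw [T, if_neg (by omega), if_pos (by omega),
      show 4*m+9-1 = 4*m+8 from by omega]
    rw [show 4*m+9-1 = 4*m+8 from by omega] at hc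
    omega

/-- If the traces of `T₂` at weights `2k` and `2k'` coincide for `k, k' ≥ 6`,
then `k ≡ k' (mod 4)`. -/
theorem trace_T2_eq_imp_congr_mod_four (k k' : ℕ) (hk : 6 ≤ k) (hk' : 6 ≤ k')
    (h : T k = T k') : k ≡ k' [MOD 4] := by
  have h1 := T_mod k hk
  have h2 := T_mod k' hk'
  rw [h] at h1
  unfold Nat.ModEq
  omega
end

section
/- For every integer k ≥ 2, the following identity holds in ℚ: (-2)^(k-2) - 1 - ∑_{j=0}^{k-1} (-1)^j · C(2k-2-j, j) · 2^j · (1 + 2^(2k-3-2j)) = T(k), where the term 2^(2k-3-2j) for j = k-1 is the rational number 2^(-1) = 1/2, and C denotes the binomial coefficient. -/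
def f (x : ℚ) (n : ℕ) : ℚ :=
  ∑ j ∈ Finset.range (n + 1), (-1 : ℚ) ^ j * (Nat.choose (n - j) j) * x ^ j

lemma pascal (n i : ℕ) :
    Nat.choose (n + 1 - i) (i + 1) = Nat.choose (n - i) i + Nat.choose (n - i) (i + 1) := by
  rcases Nat.lt_or_ge i (n + 1) with h | h
  · have h1 : n + 1 - i = (n - i) + 1 := by omega
    rw [h1, Nat.choose_succ_succ']
  · have h1 : n + 1 - i = 0 := by omega
    have h2 : n - i = 0 := by omega
    rw [h1, h2]
    simp [Nat.choose_eq_zero_of_lt (show 0 < i by omega)]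

lemma f_rec (x : ℚ) (n : ℕ) : f x (n + 2) = f x (n + 1) - x * f x n := by
  have h0 : f x (n + 2)
      = ∑ i ∈ Finset.range (n + 2),
          (-1 : ℚ) ^ (i+1) * (Nat.choose (n + 1 - i) (i+1)) * x ^ (i+1) + 1 := by
    unfold f
    rw [Finset.sum_range_succ']
    norm_num
    apply Finset.sum_congr rfl
    intro i _
    rw [show n + 2 - (i + 1) = n + 1 - i from by omega]
  have h1 : ∀ i ∈ Finset.range (n + 2),
      (-1 : ℚ) ^ (i+1) * (Nat.choose (n + 1 - i) (i+1)) * x ^ (i+1)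
      = (-1 : ℚ) ^ (i+1) * (Nat.choose (n - i) (i+1)) * x ^ (i+1)
        + (-x) * ((-1 : ℚ) ^ i * (Nat.choose (n - i) i) * x ^ i) := by
    intro i hi
    rw [pascal n i]
    push_cast
    ring
  have h2 : ∑ i ∈ Finset.range (n + 2),
      (-1 : ℚ) ^ (i+1) * (Nat.choose (n - i) (i+1)) * x ^ (i+1) + 1 = f x (n+1) := by
    rw [Finset.sum_range_succ]
    have hz : (Nat.choose (n - (n+1)) (n+1+1) : ℚ) = 0 := by
      rw [show n - (n+1) = 0 from by omega, Nat.choose_eq_zero_of_lt (by omega)]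
      norm_num
    rw [hz]
    unfold f
    rw [Finset.sum_range_succ' (n := n + 1)]
    norm_num
    apply Finset.sum_congr rfl
    intro i _
    rw [show n + 1 - (i + 1) = n - i from by omega]
  have h3 : ∑ i ∈ Finset.range (n + 2),
      (-1 : ℚ) ^ i * (Nat.choose (n - i) i) * x ^ i = f x n := by
    rw [Finset.sum_range_succ]
    have hz : (Nat.choose (n - (n+1)) (n+1) : ℚ) = 0 := by
      rw [show n - (n+1) = 0 from by omega, Nat.choose_eq_zero_of_lt (by omega)]
      norm_num
    rw [hz]
    unfold f
    ring
  rw [h0, Finset.sum_congr rfl h1, Finset.sum_add_distrib, ← Finset.mul_sum, h3]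
  linarith [h2]

def U : ℕ → ℚ
  | 0 => 1
  | 1 => 1
  | n + 2 => U (n + 1) - 2 * U n

def W : ℕ → ℚ
  | 0 => 1
  | 1 => 2
  | n + 2 => 2 * W (n + 1) - 2 * W n

lemma U_rec (n : ℕ) : U (n + 2) = U (n + 1) - 2 * U n := rfl
lemma W_rec (n : ℕ) : W (n + 2) = 2 * W (n + 1) - 2 * W n := rfl
lemma U0 : U 0 = 1 := rfl
lemma U1 : U 1 = 1 := rfl
lemma W0 : W 0 = 1 := rfl
lemma W1 : W 1 = 2 := rfl
lemma a0 : a 0 = 1 := rfl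
lemma a1 : a 1 = -1 := rfl

lemma W4 (n : ℕ) : W (n + 4) = -4 * W n := by
  rw [show n + 4 = (n + 2) + 2 from rfl, W_rec, show n + 3 = (n + 1) + 2 from rfl, W_rec, W_rec]
  ring

lemma W2v : W 2 = 2 := by rw [show (2:ℕ) = 0 + 2 from rfl, W_rec, W1, W0]; norm_num
lemma W4v : W 4 = -4 := by have h := W4 0; rw [W0] at h; norm_num at h; exact h
lemma W6v : W 6 = -8 := by have h := W4 2; rw [W2v] at h; norm_num at h; exact h
lemma W8v : W 8 = 16 := by have h := W4 4; rw [W4v] at h; norm_num at h; exact h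

lemma f_zero (x : ℚ) : f x 0 = 1 := by simp [f]

lemma f_one (x : ℚ) : f x 1 = 1 := by
  simp [f, Finset.sum_range_succ]

lemma fU : ∀ n, f 2 n = U n := by
  have h : ∀ n, f 2 n = U n ∧ f 2 (n + 1) = U (n + 1) := by
    intro n
    induction n with
    | zero => rw [f_zero, f_one, U0, U1]; exact ⟨rfl, rfl⟩
    | succ n ih => exact ⟨ih.2, by rw [f_rec, U_rec, ih.1, ih.2]⟩
  exact fun n => (h n).1

lemma fW : ∀ n, 2 ^ n * f 2⁻¹ n = W n := by
  have h : ∀ n, 2 ^ n * f 2⁻¹ n = W n ∧ 2 ^ (n+1) * f 2⁻¹ (n + 1) = W (n + 1) := by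
    intro n
    induction n with
    | zero => rw [f_zero, f_one, W0, W1]; norm_num
    | succ n ih =>
      refine ⟨ih.2, ?_⟩
      rw [f_rec, W_rec, ← ih.1, ← ih.2]
      ring
  exact fun n => (h n).1

lemma U4 (n : ℕ) : U (n + 4) = -3 * U (n + 2) - 4 * U n := by
  rw [show n + 4 = (n + 2) + 2 from rfl, U_rec, show n + 3 = (n + 1) + 2 from rfl, U_rec, U_rec]
  ring

lemma Ua : ∀ m, (a m : ℚ) = U (2 * m) := by
  have h : ∀ m, ((a m : ℚ) = U (2 * m)) ∧ ((a (m + 1) : ℚ) = U (2 * m + 2)) := by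
    intro m
    induction m with
    | zero =>
      constructor
      · show ((a 0 : ℚ)) = U 0
        rw [a0, U0]; norm_num
      · show ((a 1 : ℚ)) = U 2
        rw [a1, show (2:ℕ) = 0 + 2 from rfl, U_rec, U1, U0]; norm_num
    | succ m ih =>
      constructor
      · rw [show 2 * (m + 1) = 2 * m + 2 from by ring]; exact ih.2
      · rw [show 2 * (m + 1) + 2 = 2 * m + 4 from by ring, U4]
        rw [show a (m + 1 + 1) = -3 * a (m + 1) - 4 * a m from rfl]
        push_cast
        try rw [ih.1]
        try rw [ih.2]
        try ring
  exact fun m => (h m).1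

lemma key : ∀ m : ℕ, (-2 : ℚ) ^ m - W (2 * m + 2) / 2 =
    (if (m + 2) % 4 = 0 then (2:ℚ) ^ (m + 1) else if (m + 2) % 4 = 1 then -(2:ℚ) ^ (m + 1) else 0) := by
  intro m
  induction m using Nat.strong_induction_on with
  | _ m ih =>
    match m with
    | 0 => norm_num [W2v]
    | 1 => norm_num [W4v]
    | 2 => norm_num [W6v]
    | 3 => norm_num [W8v]
    | (m + 4) =>
      have hih := ih m (by omega)
      have hW : W (2 * (m + 4) + 2) = 16 * W (2 * m + 2) := by
        rw [show 2 * (m + 4) + 2 = (2 * m + 2 + 4) + 4 from by ring, W4, W4]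
        ring
      have hmod : (m + 4 + 2) % 4 = (m + 2) % 4 := by omega
      rw [hW, hmod, show (-2:ℚ) ^ (m + 4) = 16 * (-2:ℚ) ^ m from by ring,
        show (2:ℚ) ^ (m + 4 + 1) = 16 * 2 ^ (m + 1) from by ring]
      split_ifs at hih ⊢ with h1 h2 <;> linarith

/-- The combinatorial formula for the trace of `T₂` obtained from the
Eichler–Selberg trace formula.  The power `2 ^ (2k - 3 - 2j)` is interpreted in `ℚ`
with integer exponent, so that for `j = k - 1` it equals `2⁻¹ = 1/2`. -/
theorem trace_T2_combinatorial_formula (k : ℕ) (hk : 2 ≤ k) :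
    (-2 : ℚ) ^ (k - 2) - 1 -
      ∑ j ∈ Finset.range k, (-1 : ℚ) ^ j * (Nat.choose (2 * k - 2 - j) j) * 2 ^ j *
        (1 + (2 : ℚ) ^ (2 * (k : ℤ) - 3 - 2 * (j : ℤ))) = (T k : ℚ) := by
  obtain ⟨m, rfl⟩ : ∃ m, k = m + 2 := ⟨k - 2, by omega⟩
  have h2 : (2 : ℚ) ≠ 0 := two_ne_zero
  -- transform each term
  have hterm : ∀ j ∈ Finset.range (m + 2),
      (-1 : ℚ) ^ j * (Nat.choose (2 * (m + 2) - 2 - j) j) * 2 ^ j *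
        (1 + (2 : ℚ) ^ (2 * ((m + 2 : ℕ) : ℤ) - 3 - 2 * (j : ℤ)))
      = (-1 : ℚ) ^ j * (Nat.choose (2 * m + 2 - j) j) * 2 ^ j
        + 2 ^ (2 * m + 1) *
          ((-1 : ℚ) ^ j * (Nat.choose (2 * m + 2 - j) j) * (2⁻¹) ^ j) := by
    intro j hj
    rw [show 2 * (m + 2) - 2 - j = 2 * m + 2 - j from by omega]
    have hpow : (2 : ℚ) ^ j * (2 : ℚ) ^ (2 * ((m + 2 : ℕ) : ℤ) - 3 - 2 * (j : ℤ))
        = 2 ^ (2 * m + 1) * (2⁻¹) ^ j := by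
      rw [show (2 * ((m + 2 : ℕ) : ℤ) - 3 - 2 * (j : ℤ))
          = ((2 * m + 1 : ℕ) : ℤ) - ((2 * j : ℕ) : ℤ) from by push_cast; ring]
      rw [zpow_sub₀ h2, zpow_natCast, zpow_natCast, inv_pow]
      rw [show 2 * j = j + j from by ring, pow_add]
      field_simp
      ring
    calc (-1 : ℚ) ^ j * (Nat.choose (2 * m + 2 - j) j) * 2 ^ j *
        (1 + (2 : ℚ) ^ (2 * ((m + 2 : ℕ) : ℤ) - 3 - 2 * (j : ℤ)))
        = (-1 : ℚ) ^ j * (Nat.choose (2 * m + 2 - j) j) * 2 ^ j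
          + (-1 : ℚ) ^ j * (Nat.choose (2 * m + 2 - j) j) *
            ((2:ℚ) ^ j * (2 : ℚ) ^ (2 * ((m + 2 : ℕ) : ℤ) - 3 - 2 * (j : ℤ))) := by ring
      _ = _ := by rw [hpow]; ring
  rw [Finset.sum_congr rfl hterm, Finset.sum_add_distrib, ← Finset.mul_sum]
  -- extend the sums from range (m+2) to range (2m+3)
  have hsub : Finset.range (m + 2) ⊆ Finset.range (2 * m + 2 + 1) :=
    Finset.range_subset_range.2 (by omega)
  have hvanish : ∀ x ∈ Finset.range (2 * m + 2 + 1), x ∉ Finset.range (m + 2) →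
      ((Nat.choose (2 * m + 2 - x) x : ℚ)) = 0 := by
    intro x _ hx
    simp only [Finset.mem_range, not_lt] at hx
    rw [Nat.choose_eq_zero_of_lt (by omega)]
    norm_num
  have e1 : ∑ j ∈ Finset.range (m + 2),
      (-1 : ℚ) ^ j * (Nat.choose (2 * m + 2 - j) j) * 2 ^ j = U (2 * m + 2) := by
    rw [← fU]
    unfold f
    apply Finset.sum_subset hsub
    intro x hx1 hx2
    rw [hvanish x hx1 hx2]
    ring
  have e2 : ∑ j ∈ Finset.range (m + 2),
      (-1 : ℚ) ^ j * (Nat.choose (2 * m + 2 - j) j) * (2⁻¹) ^ j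
      = f 2⁻¹ (2 * m + 2) := by
    unfold f
    apply Finset.sum_subset hsub
    intro x hx1 hx2
    rw [hvanish x hx1 hx2]
    ring
  rw [e1, e2]
  have e3 : (2 : ℚ) ^ (2 * m + 1) * f 2⁻¹ (2 * m + 2) = W (2 * m + 2) / 2 := by
    have h := fW (2 * m + 2)
    rw [show 2 * m + 2 = (2 * m + 1) + 1 from rfl, pow_succ] at h
    rw [show ((2:ℚ) ^ (2 * m + 1) * 2 * f 2⁻¹ (2 * m + 1 + 1)) =
      2 * ((2:ℚ) ^ (2 * m + 1) * f 2⁻¹ (2 * m + 1 + 1)) from by ring] at h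
    linarith
  rw [e3]
  have e4 : U (2 * m + 2) = (a (m + 1) : ℚ) := by
    rw [Ua (m + 1), show 2 * (m + 1) = 2 * m + 2 from by ring]
  rw [e4]
  have hk := key m
  rw [show m + 2 - 2 = m from by omega]
  unfold T
  rw [show m + 2 - 1 = m + 1 from by omega]
  split_ifs at hk ⊢ with h1 hq <;> push_cast <;> linarith
end

section
/- For every natural number n, a(n) = ∑_{j=0}^{n} (-1)^j · C(2n-j, j) · 2^j, where C denotes the binomial coefficient. -/
open Finset

def c (m : ℕ) : ℤ :=
  ∑ j ∈ Finset.range (m + 1), (-1 : ℤ) ^ j * (Nat.choose (m - j) j) * 2 ^ j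

lemma pascal_step (m i : ℕ) (hi : i ≤ m + 1) :
    (((m + 1 - i).choose (i + 1) : ℤ)) =
      ((m - i).choose i : ℤ) + ((m - i).choose (i + 1) : ℤ) := by
  rcases Nat.lt_or_ge i (m + 1) with h | h
  · have hs : m + 1 - i = (m - i) + 1 := by omega
    rw [hs, Nat.choose_succ_succ]
    push_cast; ring
  · have hi' : i = m + 1 := le_antisymm hi h
    subst hi'
    have h1 : m + 1 - (m + 1) = 0 := by omega
    have h2 : m - (m + 1) = 0 := by omega
    rw [h1, h2]
    simp [Nat.choose_eq_zero_of_lt (by omega : 0 < m + 2),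
      Nat.choose_eq_zero_of_lt (by omega : 0 < m + 1)]

lemma c_rec (m : ℕ) : c (m + 2) = c (m + 1) - 2 * c m := by
  have h1 : c (m + 2) =
      (∑ i ∈ range (m + 2),
        (-1 : ℤ) ^ (i + 1) * ((m + 1 - i).choose (i + 1)) * 2 ^ (i + 1)) + 1 := by
    rw [c, Finset.sum_range_succ']
    simp
  have h2 : ∀ i ∈ range (m + 2),
      (-1 : ℤ) ^ (i + 1) * ((m + 1 - i).choose (i + 1)) * 2 ^ (i + 1)
      = (-2) * ((-1 : ℤ) ^ i * ((m - i).choose i) * 2 ^ i)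
        + (-1 : ℤ) ^ (i + 1) * ((m - i).choose (i + 1)) * 2 ^ (i + 1) := by
    intro i hi
    have hi' : i ≤ m + 1 := Nat.lt_succ_iff.mp (mem_range.mp hi)
    rw [pascal_step m i hi']
    ring
  rw [h1, Finset.sum_congr rfl h2, Finset.sum_add_distrib, ← Finset.mul_sum]
  have h3 : (∑ i ∈ range (m + 2), (-1 : ℤ) ^ i * ((m - i).choose i) * 2 ^ i) = c m := by
    rw [Finset.sum_range_succ]
    have hz : (m - (m + 1)).choose (m + 1) = 0 := by
      have : m - (m + 1) = 0 := by omega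
      rw [this]; exact Nat.choose_eq_zero_of_lt (by omega)
    simp [c, hz]
  have h4 : (∑ i ∈ range (m + 2),
      (-1 : ℤ) ^ (i + 1) * ((m - i).choose (i + 1)) * 2 ^ (i + 1)) = c (m + 1) - 1 := by
    have hc : c (m + 1) =
        (∑ i ∈ range (m + 1),
          (-1 : ℤ) ^ (i + 1) * ((m + 1 - (i + 1)).choose (i + 1)) * 2 ^ (i + 1)) + 1 := by
      rw [c, Finset.sum_range_succ']
      simp
    rw [Finset.sum_range_succ]
    have h0 : ((m - (m + 1)).choose (m + 2) : ℤ) = 0 := by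
      have : m - (m + 1) = 0 := by omega
      rw [this]
      exact_mod_cast Nat.choose_eq_zero_of_lt (by omega)
    rw [h0]
    have he : ∀ i ∈ range (m + 1),
        (-1 : ℤ) ^ (i + 1) * ((m - i).choose (i + 1)) * 2 ^ (i + 1)
        = (-1 : ℤ) ^ (i + 1) * ((m + 1 - (i + 1)).choose (i + 1)) * 2 ^ (i + 1) := by
      intro i hi
      have : m - i = m + 1 - (i + 1) := by omega
      rw [this]
    rw [Finset.sum_congr rfl he, hc]
    ring
  rw [h3, h4]
  ring

lemma sum_eq_c (n : ℕ) :
    (∑ j ∈ Finset.range (n + 1), (-1 : ℤ) ^ j * (Nat.choose (2 * n - j) j) * 2 ^ j)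
      = c (2 * n) := by
  rw [c]
  apply Finset.sum_subset
  · intro j hj
    simp only [mem_range] at *
    omega
  · intro j hj hj'
    simp only [mem_range] at hj hj'
    have : (2 * n - j).choose j = 0 := Nat.choose_eq_zero_of_lt (by omega)
    simp [this]

lemma a_eq_c : ∀ n, a n = c (2 * n) ∧ a (n + 1) = c (2 * (n + 1)) := by
  intro n
  induction n with
  | zero =>
    constructor
    · show a 0 = c 0
      decide
    · show a 1 = c 2
      decide
  | succ n ih =>
    refine ⟨ih.2, ?_⟩
    have h1 := c_rec (2 * n)
    have h2 := c_rec (2 * n + 1)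
    have h3 := c_rec (2 * n + 2)
    have ha : a (n + 2) = -3 * a (n + 1) - 4 * a n := rfl
    have e1 : 2 * (n + 1) = 2 * n + 2 := by ring
    have e2 : 2 * (n + 2) = 2 * n + 4 := by ring
    have e3 : 2 * n + 1 + 2 = 2 * n + 3 := by ring
    have e4 : 2 * n + 2 + 2 = 2 * n + 4 := by ring
    rw [e3] at h2
    rw [e4] at h3
    rw [show n + 1 + 1 = n + 2 from rfl, ha, e2, ih.2.trans (by rw [e1]),
      ih.1]
    linarith

/-- Closed combinatorial formula for the sequence `a`. -/
theorem a_eq_sum (n : ℕ) :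
    a n = ∑ j ∈ Finset.range (n + 1), (-1 : ℤ) ^ j * (Nat.choose (2 * n - j) j) * 2 ^ j := by
  rw [sum_eq_c]
  exact (a_eq_c n).1
end

section
/- Let ω = (1 - i·√7)/2 ∈ ℂ and let ω̄ = (1 + i·√7)/2 be its complex conjugate. Then for every natural number n, the image of a(n) in ℂ equals (ω^(2n+1) - ω̄^(2n+1))/(ω - ω̄). -/
open Complex

/-- Binet-type formula for `a(n)` in terms of `ω = (1 - i√7)/2` and its
conjugate `ω̄ = (1 + i√7)/2`. -/
theorem a_eq_omega_formula (ω ωbar : ℂ)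
    (hω : ω = (1 - Complex.I * Real.sqrt 7) / 2)
    (hωbar : ωbar = (1 + Complex.I * Real.sqrt 7) / 2) (n : ℕ) :
    (a n : ℂ) = (ω ^ (2 * n + 1) - ωbar ^ (2 * n + 1)) / (ω - ωbar) := by
  have h7 : ((Real.sqrt 7 : ℝ) : ℂ) ^ 2 = 7 := by
    norm_cast
    rw [Real.sq_sqrt] <;> norm_num
  have hs : ω ^ 2 = ω - 2 := by
    rw [hω]; field_simp; ring_nf
    rw [Complex.I_sq]; ring_nf
    rw [h7]; ring
  have hsb : ωbar ^ 2 = ωbar - 2 := by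
    rw [hωbar]; field_simp; ring_nf
    rw [Complex.I_sq]; ring_nf
    rw [h7]; ring
  have hne : ω - ωbar ≠ 0 := by
    rw [hω, hωbar]
    have : ((Real.sqrt 7 : ℝ) : ℂ) ≠ 0 := by
      simp only [ne_eq, Complex.ofReal_eq_zero]
      positivity
    intro h
    apply this
    have := Complex.I_ne_zero
    have h2 : Complex.I * (Real.sqrt 7 : ℂ) = 0 := by linear_combination -h
    rcases mul_eq_zero.mp h2 with h3 | h3
    · exact absurd h3 this
    · exact h3
  have h4 : ω ^ 4 = -3 * ω ^ 2 - 4 := by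
    have : ω ^ 4 = (ω ^ 2) ^ 2 := by ring
    rw [this, hs]; ring_nf; rw [hs]; ring
  have h4b : ωbar ^ 4 = -3 * ωbar ^ 2 - 4 := by
    have : ωbar ^ 4 = (ωbar ^ 2) ^ 2 := by ring
    rw [this, hsb]; ring_nf; rw [hsb]; ring
  have key : ∀ m : ℕ, ω ^ (2 * m + 1) - ωbar ^ (2 * m + 1) = (a m : ℂ) * (ω - ωbar) := by
    intro m
    induction m using Nat.twoStepInduction with
    | zero => simp [a]
    | one =>
      show ω ^ 3 - ωbar ^ 3 = _
      have e1 : ω ^ 3 = ω ^ 2 * ω := by ring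
      have e2 : ωbar ^ 3 = ωbar ^ 2 * ωbar := by ring
      rw [e1, e2, hs, hsb]
      simp [a, hs, hsb]
      ring_nf
      rw [hs, hsb]; ring
    | more k ih1 ih2 =>
      have e1 : ω ^ (2 * (k + 2) + 1) = ω ^ 4 * ω ^ (2 * k + 1) := by ring
      have e2 : ωbar ^ (2 * (k + 2) + 1) = ωbar ^ 4 * ωbar ^ (2 * k + 1) := by ring
      have e3 : ω ^ (2 * (k + 1) + 1) = ω ^ 2 * ω ^ (2 * k + 1) := by ring
      have e4 : ωbar ^ (2 * (k + 1) + 1) = ωbar ^ 2 * ωbar ^ (2 * k + 1) := by ring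
      have ha : (a (k + 2) : ℂ) = -3 * a (k + 1) - 4 * a k := by
        show ((-3 * a (k + 1) - 4 * a k : ℤ) : ℂ) = _
        push_cast; ring
      rw [e1, e2, h4, h4b, ha]
      have : ω ^ 2 * ω ^ (2 * k + 1) - ωbar ^ 2 * ωbar ^ (2 * k + 1)
          = (a (k + 1) : ℂ) * (ω - ωbar) := by rw [← e3, ← e4]; exact ih2
      linear_combination (-3 : ℂ) * this - 4 * ih1
  rw [key n, mul_div_assoc, div_self hne, mul_one]
end

section
/- Let ω ∈ ℤ₂ be the root of x² - x + 2 = 0 with v₂(ω) = 1, and set ω̄ = 1 - ω. If m and n are integers with 1 ≤ m < n and ω^n - ω̄^n = ω^m - ω̄^m in ℤ₂, then m ≤ v₂(n - m) + 2. -/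
/-! Put `ω̄ = 1 - ω`; then `ω ω̄ = 2`, so `ω̄` is a unit and `ω̄ ≡ 1 mod 2`.
Writing `n = m + k`, the equation reads `ω^m (ω^k - 1) = ω̄^m (ω̄^k - 1)`, whose left side
has valuation exactly `m`; hence `m = v₂(ω̄^k - 1)`. As `ω̄^k + 1` is even,
`v₂(ω̄^k - 1) + 1 ≤ v₂(ω̄^(2k) - 1)`, and lifting the exponent for `x = ω̄²`, which
satisfies `v₂(x - 1) = 3`, gives `v₂(x^k - 1) = 3 + v₂(k)`. -/

section LiftingTheExponent

variable {R : Type*} [CommRing R] {x y : R}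

lemma Prime.not_two_dvd_natCast_of_odd (h2 : Prime (2 : R)) {b : ℕ} (hb : Odd b) :
    ¬(2 : R) ∣ b := by
  obtain ⟨c, rfl⟩ := hb
  push_cast
  exact fun h => h2.not_isUnit (isUnit_of_dvd_one ((dvd_add_right (dvd_mul_right 2 _)).mp h))

variable [IsDomain R]

lemma emultiplicity_two_natCast_two_pow_mul_odd (h2 : Prime (2 : R)) (a : ℕ) {b : ℕ}
    (hb : Odd b) : emultiplicity (2 : R) ((2 ^ a * b : ℕ) : R) = a := by
  rw [Nat.cast_mul, Nat.cast_pow, Nat.cast_ofNat, emultiplicity_mul h2,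
    emultiplicity_pow_self_of_prime h2, emultiplicity_eq_zero.2 (h2.not_two_dvd_natCast_of_odd hb),
    add_zero]

lemma emultiplicity_two_pow_two_pow_add_pow_two_pow (h2 : Prime (2 : R)) (hx : ¬2 ∣ x)
    (hxy : 4 ∣ x - y) (i : ℕ) : emultiplicity 2 (x ^ 2 ^ i + y ^ 2 ^ i) = 1 := by
  have h4 : (4 : R) ∣ x ^ 2 ^ i - y ^ 2 ^ i := hxy.trans (sub_dvd_pow_sub_pow x y _)
  have hsum : x ^ 2 ^ i + y ^ 2 ^ i = 2 * x ^ 2 ^ i - (x ^ 2 ^ i - y ^ 2 ^ i) := by ring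
  rw [show (1 : ℕ∞) = (1 : ℕ) from rfl, emultiplicity_eq_coe, hsum, pow_one, one_add_one_eq_two,
    sq]
  rw [show (4 : R) = 2 * 2 by norm_num] at h4
  constructor
  · exact dvd_sub (dvd_mul_right _ _) ((dvd_mul_right 2 2).trans h4)
  · intro h
    have h' : 2 * 2 ∣ 2 * x ^ 2 ^ i := by simpa using dvd_add h h4
    exact hx (h2.dvd_of_dvd_pow ((mul_dvd_mul_iff_left h2.ne_zero).mp h'))

lemma emultiplicity_two_pow_two_pow_sub_pow_two_pow (h2 : Prime (2 : R)) (hx : ¬2 ∣ x)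
    (hxy : 4 ∣ x - y) (a : ℕ) :
    emultiplicity 2 (x ^ 2 ^ a - y ^ 2 ^ a) = emultiplicity 2 (x - y) + a := by
  simp only [pow_two_pow_sub_pow_two_pow a, emultiplicity_mul h2, Finset.emultiplicity_prod h2,
    emultiplicity_two_pow_two_pow_add_pow_two_pow h2 hx hxy, Finset.sum_const, Finset.card_range,
    nsmul_one, add_comm]

/-- The lifting-the-exponent lemma for `p = 2`. -/
theorem emultiplicity_two_pow_sub_pow (h2 : Prime (2 : R)) (hx : ¬2 ∣ x) (hxy : 4 ∣ x - y)
    (n : ℕ) :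
    emultiplicity 2 (x ^ n - y ^ n) = emultiplicity 2 (x - y) + emultiplicity 2 (n : R) := by
  rcases eq_or_ne n 0 with rfl | hn
  · simp
  obtain ⟨a, b, hb, rfl⟩ := Nat.exists_eq_two_pow_mul_odd hn
  have hxy2 : (2 : R) ∣ x ^ 2 ^ a - y ^ 2 ^ a :=
    (Dvd.intro 2 (by norm_num)).trans (hxy.trans (sub_dvd_pow_sub_pow x y _))
  rw [pow_mul, pow_mul, emultiplicity_pow_sub_pow_of_prime h2 hxy2
    (fun h => hx (h2.dvd_of_dvd_pow h)) (h2.not_two_dvd_natCast_of_odd hb),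
    emultiplicity_two_pow_two_pow_sub_pow_two_pow h2 hx hxy,
    emultiplicity_two_natCast_two_pow_mul_odd h2 a hb]

end LiftingTheExponent

section QuadraticRoot

variable {R : Type*} [CommRing R] [IsDomain R] {ω : R}

lemma not_two_dvd_one_sub (h2 : Prime (2 : R)) (hroot : ω ^ 2 - ω + 2 = 0) (h2ω : 2 ∣ ω) :
    ¬2 ∣ 1 - ω := by
  intro h
  have hprod : ω * (1 - ω) = 2 * 1 := by linear_combination -hroot
  have h4 : 2 * 2 ∣ (2 : R) * 1 := hprod ▸ mul_dvd_mul h2ω h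
  exact h2.not_isUnit (isUnit_of_dvd_one ((mul_dvd_mul_iff_left h2.ne_zero).mp h4))

-- `((1 - ω)² - 1)(ω - 3) = 8`, and `ω - 3 = -((1 - ω) + 2)` is odd.
lemma emultiplicity_two_one_sub_sq_sub_one (h2 : Prime (2 : R)) (hroot : ω ^ 2 - ω + 2 = 0)
    (h2ω : 2 ∣ ω) : emultiplicity 2 ((1 - ω) ^ 2 - 1) = 3 := by
  have hodd : ¬(2 : R) ∣ ω - 3 := fun h =>
    not_two_dvd_one_sub h2 hroot h2ω (by convert (dvd_add h (dvd_refl 2)).neg_right using 1; ring)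
  have h8 : ((1 - ω) ^ 2 - 1) * (ω - 3) = 2 ^ 3 := by linear_combination (ω - 4) * hroot
  have := congrArg (emultiplicity 2) h8
  rwa [emultiplicity_mul h2, emultiplicity_pow_self_of_prime h2,
    emultiplicity_eq_zero.2 hodd, add_zero] at this

lemma emultiplicity_two_one_sub_pow_sub_one_add_one_le (h2 : Prime (2 : R))
    (hroot : ω ^ 2 - ω + 2 = 0) (h2ω : 2 ∣ ω) (k : ℕ) :
    emultiplicity 2 ((1 - ω) ^ k - 1) + 1 ≤ emultiplicity 2 (k : R) + 3 := by
  set u := 1 - ω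
  have h2u : ¬(2 : R) ∣ u ^ 2 := fun h => not_two_dvd_one_sub h2 hroot h2ω (h2.dvd_of_dvd_pow h)
  have h4 : (2 : R) ^ 2 ∣ u ^ 2 - 1 := pow_dvd_of_le_emultiplicity <| by
    rw [emultiplicity_two_one_sub_sq_sub_one h2 hroot h2ω]; norm_num
  have heven : (2 : R) ∣ u ^ k + 1 := by
    have : (2 : R) ∣ u ^ k - 1 ^ k :=
      (dvd_neg.mpr h2ω).trans (by simpa [u] using sub_dvd_pow_sub_pow u 1 k)
    convert dvd_add this (dvd_refl 2) using 1
    ring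
  calc emultiplicity 2 (u ^ k - 1) + 1
      ≤ emultiplicity 2 (u ^ k - 1) + emultiplicity 2 (u ^ k + 1) := by
        gcongr
        exact_mod_cast le_emultiplicity_of_pow_dvd (k := 1) (by simpa using heven)
    _ = emultiplicity 2 ((u ^ 2) ^ k - 1 ^ k) := by
        rw [← emultiplicity_mul h2]; ring_nf
    _ = emultiplicity 2 (k : R) + 3 := by
        rw [emultiplicity_two_pow_sub_pow h2 h2u (by norm_num at h4; simpa using h4),
          emultiplicity_two_one_sub_sq_sub_one h2 hroot h2ω, add_comm]

end QuadraticRoot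

theorem PadicInt.emultiplicity_eq_valuation {p : ℕ} [Fact p.Prime] {x : ℤ_[p]} (hx : x ≠ 0) :
    emultiplicity (p : ℤ_[p]) x = x.valuation := by
  simp only [emultiplicity_eq_coe, ← Ideal.mem_span_singleton,
    PadicInt.mem_span_pow_iff_le_valuation x hx]
  omega

theorem m_le_val_add_two_general (ω : ℤ_[2]) (hroot : ω ^ 2 - ω + 2 = 0) (hval : ω.valuation = 1)
    (m n : ℕ) (hmn : m < n)
    (heq : ω ^ n - (1 - ω) ^ n = ω ^ m - (1 - ω) ^ m) :
    (m : ℤ) ≤ ((n : ℤ_[2]) - (m : ℤ_[2])).valuation + 2 := by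
  have h2 : Prime (2 : ℤ_[2]) := by simpa using PadicInt.prime_p (p := 2)
  have hv (x : ℤ_[2]) (hx : x ≠ 0) : emultiplicity 2 x = x.valuation := by
    simpa using PadicInt.emultiplicity_eq_valuation hx
  have hω : emultiplicity 2 ω = 1 := by
    rw [hv ω (by rintro rfl; simp at hval), hval, Nat.cast_one]
  have h2ω : (2 : ℤ_[2]) ∣ ω := by simpa using pow_dvd_of_le_emultiplicity (k := 1) hω.ge
  obtain ⟨k, rfl⟩ := Nat.exists_eq_add_of_lt hmn
  have hsplit : ω ^ m * (ω ^ (k + 1) - 1) = (1 - ω) ^ m * ((1 - ω) ^ (k + 1) - 1) := by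
    rw [add_assoc, pow_add, pow_add] at heq
    linear_combination heq
  have hunit : ¬(2 : ℤ_[2]) ∣ ω ^ (k + 1) - 1 := fun h =>
    h2.not_isUnit (isUnit_of_dvd_one (by simpa using dvd_sub (dvd_pow h2ω k.succ_ne_zero) h))
  have hleft : emultiplicity 2 (ω ^ m * (ω ^ (k + 1) - 1)) = m := by
    rw [emultiplicity_mul h2, emultiplicity_pow h2, hω, emultiplicity_eq_zero.2 hunit, mul_one,
      add_zero]
  have hright : emultiplicity 2 ((1 - ω) ^ m * ((1 - ω) ^ (k + 1) - 1)) =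
      emultiplicity 2 ((1 - ω) ^ (k + 1) - 1) := by
    rw [emultiplicity_mul h2, emultiplicity_pow h2,
      emultiplicity_eq_zero.2 (not_two_dvd_one_sub h2 hroot h2ω), mul_zero, zero_add]
  have hbound := emultiplicity_two_one_sub_pow_sub_one_add_one_le h2 hroot h2ω (k + 1)
  rw [← hright, ← hsplit, hleft, hv _ (by exact_mod_cast k.succ_ne_zero)] at hbound
  have hk : ((m + k + 1 : ℕ) : ℤ_[2]) - m = ((k + 1 : ℕ) : ℤ_[2]) := by push_cast; ring
  rw [hk]
  have : m + 1 ≤ ((k + 1 : ℕ) : ℤ_[2]).valuation + 3 := by exact_mod_cast hbound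
  omega

/-- If `ω ∈ ℤ₂` is the root of `x² - x + 2` with `v₂(ω) = 1`, `ω̄ = 1 - ω`, and
`ω^n - ω̄^n = ω^m - ω̄^m` with `1 ≤ m < n`, then `m ≤ v₂(n - m) + 2`. -/
theorem m_le_val_add_two (ω : ℤ_[2]) (hroot : ω ^ 2 - ω + 2 = 0) (hval : ω.valuation = 1)
    (m n : ℕ) (hm : 1 ≤ m) (hmn : m < n)
    (heq : ω ^ n - (1 - ω) ^ n = ω ^ m - (1 - ω) ^ m) :
    (m : ℤ) ≤ ((n : ℤ_[2]) - (m : ℤ_[2])).valuation + 2 :=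
  m_le_val_add_two_general ω hroot hval m n hmn heq
end

section
/- Let ω ∈ ℤ₂ be the root of x² - x + 2 = 0 with v₂(ω) = 1. Then for every integer n ≥ 1, v₂((1 - ω)^(2n) - 1) = 3 + v₂(n). -/
/-!
Since `ω² = ω - 2`, we have `(1 - ω)² - 1 = -(ω + 2)`, and `(ω + 2)(3 - ω) = 8` with `3 - ω` a
unit because `ω` is even. So `x = (1 - ω)²` satisfies `v₂(x - 1) = 3`, and the lifting-the-exponent
lemma at the prime `2` (valid once `4 ∣ x - 1`) gives `v₂(xⁿ - 1) = v₂(x - 1) + v₂(n)`.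
-/

section LiftingTheExponentTwo

variable {R : Type*} [CommRing R]

theorem Prime.not_dvd_of_dvd_sub_one {p y : R} (hp : Prime p) (h : p ∣ y - 1) : ¬p ∣ y :=
  fun hy => hp.not_dvd_one ((dvd_sub_right hy).mp h)

variable [IsDomain R] {x : R}

theorem emultiplicity_two_sq_sub_one (h2 : Prime (2 : R)) (hx : 4 ∣ x - 1) :
    emultiplicity 2 (x ^ 2 - 1) = emultiplicity 2 (x - 1) + 1 := by
  obtain ⟨c, hc⟩ := hx
  have hplus : x + 1 = 2 * (1 + 2 * c) := by linear_combination hc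
  have hodd : ¬(2 : R) ∣ 1 + 2 * c := h2.not_dvd_of_dvd_sub_one ⟨c, by ring⟩
  have htwo : emultiplicity (2 : R) 2 = 1 := by simpa using emultiplicity_pow_self_of_prime h2 1
  rw [show x ^ 2 - 1 = (x + 1) * (x - 1) by ring, emultiplicity_mul h2, hplus,
    emultiplicity_mul h2, emultiplicity_eq_zero.2 hodd, htwo, add_zero, add_comm]

theorem emultiplicity_two_pow_two_pow_sub_one (h2 : Prime (2 : R)) (hx : 4 ∣ x - 1) (a : ℕ) :
    emultiplicity 2 (x ^ 2 ^ a - 1) = emultiplicity 2 (x - 1) + a := by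
  induction a with
  | zero => simp
  | succ a ih =>
    rw [pow_succ, pow_mul, emultiplicity_two_sq_sub_one h2 (hx.trans (sub_one_dvd_pow_sub_one _ _)),
      ih, Nat.cast_succ, add_assoc]

theorem emultiplicity_two_pow_sub_one (h2 : Prime (2 : R)) (hx : 4 ∣ x - 1) (n : ℕ) :
    emultiplicity 2 (x ^ n - 1) = emultiplicity 2 (x - 1) + emultiplicity 2 (n : R) := by
  rcases eq_or_ne n 0 with rfl | hn
  · simp
  obtain ⟨a, m, ⟨j, rfl⟩, rfl⟩ := Nat.exists_eq_two_pow_mul_odd hn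
  have h4 : 4 ∣ x ^ 2 ^ a - 1 := hx.trans (sub_one_dvd_pow_sub_one _ _)
  have h2dvd : 2 ∣ x ^ 2 ^ a - 1 := dvd_trans ⟨2, by norm_num⟩ h4
  have hodd : ¬(2 : R) ∣ ((2 * j + 1 : ℕ) : R) :=
    h2.not_dvd_of_dvd_sub_one ⟨j, by push_cast; ring⟩
  have hpow : emultiplicity 2 ((x ^ 2 ^ a) ^ (2 * j + 1) - 1 ^ (2 * j + 1)) =
      emultiplicity 2 (x ^ 2 ^ a - 1) :=
    emultiplicity_pow_sub_pow_of_prime h2 h2dvd (h2.not_dvd_of_dvd_sub_one h2dvd) hodd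
  rw [one_pow, ← pow_mul] at hpow
  rw [hpow, emultiplicity_two_pow_two_pow_sub_one h2 hx, Nat.cast_mul, Nat.cast_pow,
    Nat.cast_ofNat, emultiplicity_mul h2, emultiplicity_pow_self_of_prime h2,
    emultiplicity_eq_zero.2 hodd, add_zero]

end LiftingTheExponentTwo

namespace PadicInt

variable {p : ℕ} [Fact p.Prime]

theorem emultiplicity_eq_valuation_s11 {x : ℤ_[p]} (hx : x ≠ 0) :
    emultiplicity (p : ℤ_[p]) x = x.valuation := by
  simp only [emultiplicity_eq_coe, ← Ideal.mem_span_singleton, mem_span_pow_iff_le_valuation x hx]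
  omega

theorem valuation_eq_of_emultiplicity_eq {x : ℤ_[p]} {k : ℕ}
    (h : emultiplicity (p : ℤ_[p]) x = k) : x.valuation = k := by
  have hx : x ≠ 0 := by rintro rfl; simp at h
  exact_mod_cast (emultiplicity_eq_valuation_s11 hx).symm.trans h

theorem isUnit_iff_not_dvd {z : ℤ_[p]} : IsUnit z ↔ ¬(p : ℤ_[p]) ∣ z := by
  rw [← not_iff_not, not_not, not_isUnit_iff, norm_lt_one_iff_dvd]

theorem prime_two : Prime (2 : ℤ_[2]) := by
  simpa using prime_p (p := 2)

end PadicInt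

/-- If `ω ∈ ℤ₂` is the root of `x² - x + 2` with `v₂(ω) = 1`, then for every `n ≥ 1`,
`v₂((1 - ω)^(2n) - 1) = 3 + v₂(n)`. -/
theorem val_pow_sub_one (ω : ℤ_[2]) (hroot : ω ^ 2 - ω + 2 = 0) (hval : ω.valuation = 1)
    (n : ℕ) (hn : 1 ≤ n) :
    ((1 - ω) ^ (2 * n) - 1).valuation = 3 + (n : ℤ_[2]).valuation := by
  have h2ω : (2 : ℤ_[2]) ∣ ω := by
    have hω : ω ≠ 0 := by rintro rfl; simp at hval
    simpa [← Ideal.mem_span_singleton] using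
      (PadicInt.mem_span_pow_iff_le_valuation ω hω 1).mpr hval.ge
  have hunit : IsUnit (ω - 3) := by
    obtain ⟨t, rfl⟩ := h2ω
    simpa [PadicInt.isUnit_iff_not_dvd] using
      PadicInt.prime_two.not_dvd_of_dvd_sub_one ⟨t - 2, by ring⟩
  obtain ⟨u, hu⟩ := hunit.exists_left_inv
  have hu_odd : ¬(2 : ℤ_[2]) ∣ u := by
    simpa [PadicInt.isUnit_iff_not_dvd] using IsUnit.of_mul_eq_one (ω - 3) hu
  have hsq : (1 - ω) ^ 2 - 1 = 2 ^ 3 * u := by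
    linear_combination (1 - u) * hroot + (ω + 2) * hu
  have hlte := emultiplicity_two_pow_sub_one PadicInt.prime_two ⟨2 * u, by rw [hsq]; ring⟩ n
  have hnval : emultiplicity (2 : ℤ_[2]) n = (n : ℤ_[2]).valuation := by
    exact_mod_cast PadicInt.emultiplicity_eq_valuation_s11 (Nat.cast_ne_zero.mpr (by omega))
  rw [hsq, emultiplicity_mul PadicInt.prime_two,
    emultiplicity_pow_self_of_prime PadicInt.prime_two, emultiplicity_eq_zero.2 hu_odd, add_zero,
    ← pow_mul, hnval] at hlte
  exact PadicInt.valuation_eq_of_emultiplicity_eq (by exact_mod_cast hlte)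
end

section
/- Let ω ∈ ℤ₂ be the root of x² - x + 2 = 0 with v₂(ω) = 1, and set ω̄ = 1 - ω. Suppose t is an integer divisible by 8. Then there exists Ω_t ∈ ℤ₂ such that for every integer k ≥ 1, v₂(ω̄^(2k-1) + (1+t)·(1-2ω)) = 3 + v₂(k - Ω_t), where k is regarded as an element of ℤ₂. (Equivalently, since ω - ω̄ = -(1-2ω) is a 2-adic unit, v₂(ω̄^(2k-1)/(ω - ω̄) - 1 - t) = 3 + v₂(k - Ω_t).) -/
/-!
Put `b = ω̄²`. From `ω² - ω + 2 = 0` we get `b - 1 = -(2 + ω)` and `(2 + ω)(ω - 3) = -8` with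
`ω - 3` a unit, so `‖b - 1‖ = 1/8`; lifting the exponent then gives
`‖b ^ m - b ^ n‖ = ‖b - 1‖ ‖m - n‖`, i.e. `k ↦ b ^ k` scales 2-adic distances on `ℕ` by `1/8`.
Multiplying the expression by the unit `ω̄` turns it into `b ^ k - d` with
`d = -(1 + t)(1 - 2ω)ω̄ ≡ 1 mod 8`. Because the residue field is `𝔽₂`, exponents `k` with `b ^ k`
ever closer to `d` can be found one binary digit at a time, and any limit point `Ω_t` of them
satisfies `‖b ^ k - d‖ = ‖b - 1‖ ‖k - Ω_t‖`. Passing to valuations needs `b ^ k ≠ d`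
(the valuation of `0` is `0`), which follows from the irrationality of `ω` by a norm computation.
-/

open Filter Topology

namespace PadicInt

section General

variable {p : ℕ} [hp : Fact p.Prime]

lemma dvd_of_norm_le {x y : ℤ_[p]} (h : ‖y‖ ≤ ‖x‖) : x ∣ y := by
  rcases eq_or_ne x 0 with rfl | hx
  · rw [norm_zero, norm_le_zero_iff] at h
    simp [h]
  rw [norm_eq_zpow_neg_valuation hx, norm_le_pow_iff_mem_span_pow,
    Ideal.mem_span_singleton] at h
  rw [unitCoeff_spec hx]
  exact Units.mul_left_dvd.2 h

lemma norm_le_inv_of_norm_lt_one {x : ℤ_[p]} (h : ‖x‖ < 1) : ‖x‖ ≤ (p : ℝ)⁻¹ := by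
  simpa using (norm_lt_pow_iff_norm_le_pow_sub_one x 0).1 (by simpa using h)

lemma norm_eq_one_of_norm_sub_one_lt_one {x : ℤ_[p]} (h : ‖x - 1‖ < 1) : ‖x‖ = 1 := by
  simpa using norm_eq_of_norm_add_lt_right (z1 := x) (z2 := -1) (by simpa [← sub_eq_add_neg])

lemma norm_pow_sub_one_of_norm_natCast_eq_one {b : ℤ_[p]} (hb : ‖b - 1‖ < 1) {j : ℕ}
    (hj : ‖(j : ℤ_[p])‖ = 1) : ‖b ^ j - 1‖ = ‖b - 1‖ := by
  obtain ⟨c, hc⟩ : b - 1 ∣ ∑ i ∈ Finset.range j, b ^ i - j := by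
    simpa [Finset.sum_sub_distrib] using
      Finset.dvd_sum (s := Finset.range j) fun i _ ↦ sub_one_dvd_pow_sub_one b i
  have hsum : ‖∑ i ∈ Finset.range j, b ^ i‖ = 1 := by
    rw [← hj]
    refine norm_eq_of_norm_add_lt_right (z2 := -(j : ℤ_[p])) ?_ |>.trans (norm_neg _)
    rw [← sub_eq_add_neg, hc, norm_neg, hj, norm_mul]
    exact mul_lt_one_of_nonneg_of_lt_one_left (norm_nonneg _) hb (norm_le_one c)
  rw [← geom_sum_mul, norm_mul, hsum, one_mul]

lemma valuation_eq_of_norm_eq {x y : ℤ_[p]} (h : ‖x‖ = ‖y‖) : x.valuation = y.valuation := by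
  rcases eq_or_ne x 0 with rfl | hx
  · rw [norm_zero, eq_comm, norm_eq_zero] at h
    simp [h]
  have hy : y ≠ 0 := by
    rintro rfl
    simp_all
  rw [norm_eq_zpow_neg_valuation hx, norm_eq_zpow_neg_valuation hy] at h
  exact_mod_cast neg_injective <| zpow_right_injective₀ (by exact_mod_cast hp.out.pos)
    (by exact_mod_cast hp.out.one_lt.ne') h

end General

lemma norm_two : ‖(2 : ℤ_[2])‖ = 2⁻¹ := by
  simpa using norm_p (p := 2)

lemma norm_eight : ‖(8 : ℤ_[2])‖ = 8⁻¹ := by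
  rw [show (8 : ℤ_[2]) = 2 ^ 3 by norm_num, norm_pow, norm_two]
  norm_num

lemma norm_le_half_or_norm_sub_one_le_half (z : ℤ_[2]) : ‖z‖ ≤ 2⁻¹ ∨ ‖z - 1‖ ≤ 2⁻¹ := by
  obtain ⟨n, hn, hz⟩ := exists_mem_range z
  rw [IsLocalRing.mem_maximalIdeal, mem_nonunits] at hz
  have := norm_le_inv_of_norm_lt_one hz
  interval_cases n <;> simp_all

lemma norm_le_half_or_norm_sub_le_half {x y : ℤ_[2]} (h : ‖y‖ ≤ ‖x‖) :
    ‖y‖ ≤ 2⁻¹ * ‖x‖ ∨ ‖y - x‖ ≤ 2⁻¹ * ‖x‖ := by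
  obtain ⟨q, rfl⟩ := dvd_of_norm_le h
  rw [← mul_sub_one, norm_mul, norm_mul, mul_comm ‖x‖, mul_comm ‖x‖]
  rcases norm_le_half_or_norm_sub_one_le_half q with hq | hq
  exacts [.inl (by gcongr), .inr (by gcongr)]

lemma norm_sq_sub_one {b : ℤ_[2]} (hb : ‖b - 1‖ ≤ 4⁻¹) : ‖b ^ 2 - 1‖ = 2⁻¹ * ‖b - 1‖ := by
  have h : ‖b - 1 + 2‖ = 2⁻¹ := by
    rw [norm_add_eq_max_of_ne (by rw [norm_two]; intro; linarith), norm_two]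
    exact max_eq_right (by linarith)
  rw [show b ^ 2 - 1 = (b - 1 + 2) * (b - 1) by ring, norm_mul, h]

lemma norm_pow_two_pow_sub_one {b : ℤ_[2]} (hb : ‖b - 1‖ ≤ 4⁻¹) (e : ℕ) :
    ‖b ^ 2 ^ e - 1‖ = 2⁻¹ ^ e * ‖b - 1‖ := by
  induction e with
  | zero => simp
  | succ e ih =>
    have h : ‖b ^ 2 ^ e - 1‖ ≤ 4⁻¹ := by
      rw [ih]
      exact (mul_le_of_le_one_left (norm_nonneg _)
        (pow_le_one₀ (by norm_num) (by norm_num))).trans hb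
    rw [pow_succ, pow_mul, norm_sq_sub_one h, ih, pow_succ]
    ring

theorem norm_pow_sub_one {b : ℤ_[2]} (hb : ‖b - 1‖ ≤ 4⁻¹) (j : ℕ) :
    ‖b ^ j - 1‖ = ‖b - 1‖ * ‖(j : ℤ_[2])‖ := by
  rcases eq_or_ne j 0 with rfl | hj
  · simp
  obtain ⟨e, m, hm, rfl⟩ := Nat.exists_eq_two_pow_mul_odd hj
  have hm1 : ‖(m : ℤ_[2])‖ = 1 := norm_natCast_eq_one_iff.2 (Nat.coprime_two_left.2 hm)
  have h2e := norm_pow_two_pow_sub_one hb e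
  have h2e_lt : ‖b ^ 2 ^ e - 1‖ < 1 := by
    rw [h2e]
    exact (mul_le_of_le_one_left (norm_nonneg _) (pow_le_one₀ (by norm_num) (by norm_num))).trans_lt
      (by linarith)
  rw [pow_mul, norm_pow_sub_one_of_norm_natCast_eq_one h2e_lt hm1, h2e]
  push_cast
  rw [norm_mul, norm_pow, norm_two, hm1]
  ring

lemma norm_pow_sub_pow {b : ℤ_[2]} (hb : ‖b - 1‖ ≤ 4⁻¹) (m n : ℕ) :
    ‖b ^ m - b ^ n‖ = ‖b - 1‖ * ‖(m : ℤ_[2]) - n‖ := by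
  wlog hnm : n ≤ m generalizing m n
  · rw [norm_sub_rev, this n m (by omega), norm_sub_rev (n : ℤ_[2])]
  obtain ⟨j, rfl⟩ := Nat.exists_eq_add_of_le hnm
  have hb1 : ‖b‖ = 1 := norm_eq_one_of_norm_sub_one_lt_one (by linarith)
  rw [pow_add, ← mul_sub_one, norm_mul, norm_pow, hb1, one_pow, one_mul, norm_pow_sub_one hb]
  push_cast
  ring_nf

lemma exists_norm_pow_sub_le {b d : ℤ_[2]} (hb : ‖b - 1‖ ≤ 4⁻¹) (hd : ‖d - 1‖ ≤ ‖b - 1‖)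
    (n : ℕ) : ∃ k : ℕ, ‖b ^ k - d‖ ≤ 2⁻¹ ^ n * ‖b - 1‖ := by
  induction n with
  | zero => exact ⟨0, by simpa [norm_sub_rev] using hd⟩
  | succ n ih =>
    obtain ⟨k, hk⟩ := ih
    have hstep : ‖b ^ k - b ^ (k + 2 ^ n)‖ = 2⁻¹ ^ n * ‖b - 1‖ := by
      rw [norm_pow_sub_pow hb]
      push_cast
      rw [sub_add_cancel_left, norm_neg, norm_pow, norm_two, mul_comm]
    rcases norm_le_half_or_norm_sub_le_half (hk.trans_eq hstep.symm) with h | h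
    · exact ⟨k, by rw [hstep] at h; rw [pow_succ]; linarith⟩
    · refine ⟨k + 2 ^ n, ?_⟩
      rw [hstep, sub_sub_sub_cancel_left] at h
      rw [pow_succ]
      linarith

theorem exists_norm_pow_sub_eq {b d : ℤ_[2]} (hb : ‖b - 1‖ ≤ 4⁻¹) (hd : ‖d - 1‖ ≤ ‖b - 1‖) :
    ∃ Ω : ℤ_[2], ∀ k : ℕ, ‖b ^ k - d‖ = ‖b - 1‖ * ‖(k : ℤ_[2]) - Ω‖ := by
  choose κ hκ using exists_norm_pow_sub_le hb hd
  obtain ⟨Ω, φ, hφ, hΩ⟩ := CompactSpace.tendsto_subseq fun n ↦ (κ n : ℤ_[2])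
  have hpow : Tendsto (fun n ↦ b ^ κ n) atTop (𝓝 d) := by
    rw [tendsto_iff_norm_sub_tendsto_zero]
    refine squeeze_zero (fun _ ↦ norm_nonneg _) hκ ?_
    simpa using (tendsto_pow_atTop_nhds_zero_of_lt_one (by norm_num)
      (by norm_num : (2⁻¹ : ℝ) < 1)).mul_const ‖b - 1‖
  refine ⟨Ω, fun k ↦ tendsto_nhds_unique
    ((tendsto_const_nhds.sub (hpow.comp hφ.tendsto_atTop)).norm) ?_⟩
  simp_rw [Function.comp_def, norm_pow_sub_pow hb]
  exact ((tendsto_const_nhds.sub hΩ).norm).const_mul _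

lemma norm_two_add_eq_norm_eight {ω : ℤ_[2]} (hroot : ω ^ 2 - ω + 2 = 0) (hω : ‖ω‖ < 1) :
    ‖2 + ω‖ = ‖(8 : ℤ_[2])‖ := by
  have h3 : ‖ω - 3‖ = 1 := by
    have h3 : ‖(3 : ℤ_[2])‖ = 1 := by
      simpa using (norm_natCast_eq_one_iff (p := 2) (n := 3)).2 (by norm_num)
    rw [← h3]
    exact norm_eq_of_norm_add_lt_right (by rwa [sub_add_cancel, h3])
  rw [← mul_one ‖2 + ω‖, ← h3, ← norm_mul, ← norm_neg (8 : ℤ_[2])]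
  congr 1
  linear_combination hroot

theorem exists_norm_sq_one_sub_pow_add_eq {ω : ℤ_[2]} (hroot : ω ^ 2 - ω + 2 = 0)
    (hω : ‖ω‖ < 1) {t : ℤ} (ht : (8 : ℤ) ∣ t) :
    ∃ Ω : ℤ_[2], ∀ k : ℕ,
      ‖((1 - ω) ^ 2) ^ k + ((1 + t : ℤ) : ℤ_[2]) * (1 - 2 * ω) * (1 - ω)‖ =
        ‖(8 : ℤ_[2]) * ((k : ℤ_[2]) - Ω)‖ := by
  have h8 := norm_two_add_eq_norm_eight hroot hω
  have hb : ‖(1 - ω) ^ 2 - 1‖ = ‖(8 : ℤ_[2])‖ := by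
    rw [← h8, ← norm_neg]
    congr 1
    linear_combination -hroot
  obtain ⟨s, rfl⟩ := ht
  have hd : ‖-(((1 + 8 * s : ℤ) : ℤ_[2]) * (1 - 2 * ω) * (1 - ω)) - 1‖ ≤ ‖(1 - ω) ^ 2 - 1‖ := by
    rw [hb, show -(((1 + 8 * s : ℤ) : ℤ_[2]) * (1 - 2 * ω) * (1 - ω)) - 1 =
      2 + ω + 8 * -(s * (1 - 2 * ω) * (1 - ω)) by push_cast; linear_combination -2 * hroot]
    refine (nonarchimedean _ _).trans (max_le h8.le ?_)
    rw [norm_mul]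
    exact mul_le_of_le_one_right (norm_nonneg _) (norm_le_one _)
  obtain ⟨Ω, hΩ⟩ := exists_norm_pow_sub_eq (hb ▸ norm_eight ▸ by norm_num) hd
  exact ⟨Ω, fun k ↦ by rw [norm_mul, ← hb, ← hΩ, sub_neg_eq_add]⟩

end PadicInt

section RootOfXSqSubXAddTwo

variable {R : Type*} [CommRing R] {r : R}

lemma exists_int_sq_one_sub_pow_eq {s : R} (hr : r ^ 2 - r + 2 = 0) (hs : s ^ 2 - s + 2 = 0)
    (k : ℕ) : ∃ A B : ℤ, ((1 - r) ^ 2) ^ k = A + B * r ∧ ((1 - s) ^ 2) ^ k = A + B * s := by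
  induction k with
  | zero => exact ⟨1, 0, by simp, by simp⟩
  | succ k ih =>
    obtain ⟨A, B, hA, hB⟩ := ih
    refine ⟨2 * B - A, -A - 2 * B, ?_, ?_⟩
    · rw [pow_succ, hA]
      push_cast
      linear_combination (A + B * r - B) * hr
    · rw [pow_succ, hB]
      push_cast
      linear_combination (A + B * s - B) * hs

lemma eq_zero_of_intCast_add_mul_eq_zero [CharZero R] (hr : r ^ 2 - r + 2 = 0) {A B : ℤ}
    (h : A + B * r = 0) : A = 0 ∧ B = 0 := by
  have hnorm : ((A ^ 2 + A * B + 2 * B ^ 2 : ℤ) : R) = 0 := by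
    push_cast
    linear_combination (A + B - B * r) * h + B ^ 2 * hr
  have hZ := Int.cast_eq_zero.1 hnorm
  obtain rfl : B = 0 := by nlinarith [sq_nonneg (2 * A + B), sq_nonneg B]
  exact ⟨by simpa using hZ, rfl⟩

/-- Applying the conjugation `r ↦ 1 - r` and multiplying would give `4 ^ k = 14 (1 + t) ^ 2`,
which fails modulo `7`. -/
lemma sq_one_sub_pow_add_ne_zero [CharZero R] (hr : r ^ 2 - r + 2 = 0) (t : ℤ) (k : ℕ) :
    ((1 - r) ^ 2) ^ k + ((1 + t : ℤ) : R) * (1 - 2 * r) * (1 - r) ≠ 0 := by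
  intro h
  obtain ⟨A, B, hA, hB⟩ := exists_int_sq_one_sub_pow_eq hr (s := 1 - r)
    (by linear_combination hr) k
  obtain ⟨hA3, hB1⟩ := eq_zero_of_intCast_add_mul_eq_zero hr (A := A - 3 * (1 + t))
    (B := B - (1 + t)) (by push_cast at h ⊢; linear_combination h - hA - 2 * (1 + t : R) * hr)
  have hnormEq : ((4 ^ k : ℤ) : R) = ((14 * (1 + t) ^ 2 : ℤ) : R) := by
    obtain rfl : A = 3 * (1 + t) := by omega
    obtain rfl : B = 1 + t := by omega
    calc ((4 ^ k : ℤ) : R) = ((1 - r) ^ 2) ^ k * ((1 - (1 - r)) ^ 2) ^ k := by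
          rw [← mul_pow]; push_cast; congr 1; linear_combination (2 + r - r ^ 2) * hr
      _ = _ := by rw [hA, hB]; push_cast; linear_combination -(1 + (t : R)) ^ 2 * hr
  have h7 : (7 : ℤ) ∣ 4 ^ k := ⟨2 * (1 + t) ^ 2, by rw [Int.cast_inj.1 hnormEq]; ring⟩
  exact absurd ((by norm_num : Prime (7 : ℤ)).dvd_of_dvd_pow h7) (by norm_num)

end RootOfXSqSubXAddTwo

open PadicInt in
/-- Let `ω ∈ ℤ₂` be the root of `x² - x + 2` with `v₂(ω) = 1` and `ω̄ = 1 - ω`.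
If `8 ∣ t`, there is `Ω_t ∈ ℤ₂` such that for every `k ≥ 1`,
`v₂(ω̄^(2k-1) + (1+t)(1-2ω)) = 3 + v₂(k - Ω_t)`. -/
theorem exists_Omega_t (ω : ℤ_[2]) (hroot : ω ^ 2 - ω + 2 = 0) (hval : ω.valuation = 1)
    (t : ℤ) (ht : (8 : ℤ) ∣ t) :
    ∃ Ωt : ℤ_[2], ∀ k : ℕ, 1 ≤ k →
      ((1 - ω) ^ (2 * k - 1) + ((1 + t : ℤ) : ℤ_[2]) * (1 - 2 * ω)).valuation =
        3 + ((k : ℤ_[2]) - Ωt).valuation := by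
  have hω : ‖ω‖ < 1 := by
    have hω0 : ω ≠ 0 := by
      rintro rfl
      simp at hval
    rw [norm_eq_zpow_neg_valuation hω0, hval]
    norm_num
  obtain ⟨Ω, hΩ⟩ := exists_norm_sq_one_sub_pow_add_eq hroot hω ht
  refine ⟨Ω, fun k hk ↦ ?_⟩
  set E := (1 - ω) ^ (2 * k - 1) + ((1 + t : ℤ) : ℤ_[2]) * (1 - 2 * ω)
  have hfac : E * (1 - ω) =
      ((1 - ω) ^ 2) ^ k + ((1 + t : ℤ) : ℤ_[2]) * (1 - 2 * ω) * (1 - ω) := by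
    rw [← pow_mul, show 2 * k = 2 * k - 1 + 1 by omega, pow_succ]
    ring
  have hunit : ‖1 - ω‖ = 1 :=
    isUnit_iff.1 (IsLocalRing.isUnit_one_sub_self_of_mem_nonunits _ (mem_nonunits.2 hω))
  have hnorm : ‖E‖ = ‖(8 : ℤ_[2]) * ((k : ℤ_[2]) - Ω)‖ := by
    rw [← hΩ, ← hfac, norm_mul, hunit, mul_one]
  have hE : E ≠ 0 := fun h0 ↦ sq_one_sub_pow_add_ne_zero hroot t k (by rw [← hfac, h0, zero_mul])
  have hkΩ : (k : ℤ_[2]) - Ω ≠ 0 := by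
    rintro h0
    rw [h0, mul_zero, norm_zero, norm_eq_zero] at hnorm
    exact hE hnorm
  rw [valuation_eq_of_norm_eq hnorm, show (8 : ℤ_[2]) = (2 : ℕ) ^ 3 by norm_num,
    valuation_p_pow_mul 3 _ hkΩ]
end

section
/- Let ε ∈ {1, -1}. If n and m are positive integers with n < m and a(n) - ε·2^n = a(m) - ε·2^m, then 2^n ≤ 8·m (equivalently, n ≤ 3 + log(m)/log(2)). -/
theorem binet_a {R : Type*} [CommRing R] {x : R} (hx : x ^ 2 + 3 * x + 4 = 0) :
    ∀ n, (2 * x + 3) * a n = (x + 2) * x ^ n + (x + 1) * (-3 - x) ^ n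
  | 0 => by simp only [a]; push_cast; ring
  | 1 => by simp only [a]; push_cast; ring
  | n + 2 => by
    simp only [a]
    push_cast
    linear_combination -3 * binet_a hx (n + 1) - 4 * binet_a hx n
      - ((x + 2) * x ^ n + (x + 1) * (-3 - x) ^ n) * hx

theorem exists_sq_add_mul_add_dvd_two_pow {b c r₀ : ℤ} (hb : Odd b) {j : ℕ} (hj : 0 < j)
    (h₀ : 2 ^ j ∣ r₀ ^ 2 + b * r₀ + c) (N : ℕ) :
    ∃ r, r ≡ r₀ [ZMOD 2 ^ j] ∧ 2 ^ (j + N) ∣ r ^ 2 + b * r + c := by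
  induction N with
  | zero => exact ⟨r₀, rfl, h₀⟩
  | succ N ih =>
    obtain ⟨r, hr, q, hq⟩ := ih
    rcases Int.even_or_odd q with ⟨q, rfl⟩ | ⟨q, rfl⟩
    · exact ⟨r, hr, q, by rw [hq]; ring⟩
    · obtain ⟨b, rfl⟩ := hb
      obtain ⟨j, rfl⟩ := Nat.exists_eq_add_of_lt hj
      refine ⟨r + 2 ^ (j + 1 + N), ?_, q + r + b + 1 + 2 ^ (j + N), ?_⟩
      · exact (Int.modEq_iff_dvd.mpr ⟨2 ^ N, by ring⟩).symm.trans hr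
      · linear_combination hq

theorem not_two_pow_dvd_pow_sub_one {r : ℤ} (hr : r % 16 = 9) {d : ℕ} (hd : d ≠ 0) :
    ¬ 2 ^ (padicValNat 2 d + 4) ∣ r ^ d - 1 := by
  have h8 : emultiplicity 2 (r - 1) = 3 := by
    rw [show (3 : ℕ∞) = (3 : ℕ) from rfl, emultiplicity_eq_coe]
    constructor <;> norm_num <;> omega
  have hlte := Int.two_pow_sub_pow' (x := r) (y := 1) d (by omega) (by omega)
  have hv : emultiplicity (2 : ℤ) d = padicValNat 2 d := by
    rw [padicValNat_eq_emultiplicity hd]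
    exact_mod_cast Int.natCast_emultiplicity 2 d
  rw [one_pow, h8, hv] at hlte
  rw [pow_dvd_iff_le_emultiplicity, hlte]
  norm_cast
  omega

theorem add_two_mul_pow_mul_pow_sub_one_eq_zero {R : Type*} [CommRing R] {x : R}
    (hx : x ^ 2 + 3 * x + 4 = 0) {n d : ℕ} (hs : (-3 - x) ^ n = 0)
    (ha : ((a (n + d) - a n : ℤ) : R) = 0) :
    (x + 2) * x ^ n * (x ^ d - 1) = 0 := by
  have hm := binet_a hx (n + d)
  rw [pow_add, pow_add] at hm
  push_cast at ha
  linear_combination binet_a hx n - hm + (2 * x + 3) * ha - (x + 1) * ((-3 - x) ^ d - 1) * hs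

theorem two_pow_dvd_pow_sub_one {r : ℤ} (hr : Odd r) {N n d : ℕ}
    (hroot : 2 ^ N ∣ r ^ 2 + 3 * r + 4) (hN : N ≤ n) (ha : 2 ^ n ∣ a (n + d) - a n) :
    2 ^ N ∣ r ^ d - 1 := by
  have cast_eq_zero : ∀ z : ℤ, 2 ^ N ∣ z → (z : ZMod (2 ^ N)) = 0 := fun z hz =>
    (ZMod.intCast_zmod_eq_zero_iff_dvd z (2 ^ N)).mpr (by exact_mod_cast hz)
  obtain ⟨t, ht⟩ : Even (-3 - r) := (show Odd (-3 : ℤ) from ⟨-2, rfl⟩).sub_odd hr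
  have hs : (-3 - (r : ZMod (2 ^ N))) ^ n = 0 := by
    have h2N : (2 : ZMod (2 ^ N)) ^ N = 0 := by exact_mod_cast ZMod.natCast_self (2 ^ N)
    have h2t : -3 - (r : ZMod (2 ^ N)) = 2 * t := by
      rw [two_mul]
      exact_mod_cast congrArg (Int.cast : ℤ → ZMod (2 ^ N)) ht
    obtain ⟨k, rfl⟩ := Nat.exists_eq_add_of_le hN
    rw [h2t, mul_pow, pow_add, h2N, zero_mul, zero_mul]
  have hzero := add_two_mul_pow_mul_pow_sub_one_eq_zero (x := (r : ZMod (2 ^ N)))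
    (by exact_mod_cast cast_eq_zero _ hroot) hs (cast_eq_zero _ ((pow_dvd_pow 2 hN).trans ha))
  have hdvd : 2 ^ N ∣ (r + 2) * r ^ n * (r ^ d - 1) := by
    exact_mod_cast (ZMod.intCast_zmod_eq_zero_iff_dvd _ (2 ^ N)).mp (by push_cast; exact hzero)
  have hcop : IsCoprime (2 ^ N) ((r + 2) * r ^ n) :=
    (Int.isCoprime_two_left.mpr ((hr.add_even even_two).mul hr.pow)).pow_left
  exact hcop.dvd_of_dvd_mul_left hdvd

theorem two_pow_n_le_general (ε : ℤ) (n m : ℕ) (hnm : n < m)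
    (h : a n - ε * 2 ^ n = a m - ε * 2 ^ m) :
    (2 : ℤ) ^ n ≤ 8 * m := by
  obtain ⟨d, rfl⟩ := Nat.exists_eq_add_of_lt hnm
  set v := padicValNat 2 (d + 1)
  have hv : 2 ^ v ≤ n + d + 1 := (Nat.le_of_dvd d.succ_pos pow_padicValNat_dvd).trans (by omega)
  suffices n ≤ v + 3 from calc
    (2 : ℤ) ^ n ≤ 2 ^ (v + 3) := pow_le_pow_right₀ one_le_two this
    _ = 8 * 2 ^ v := by ring
    _ ≤ 8 * (n + d + 1 : ℕ) := by gcongr; exact_mod_cast hv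
  by_contra! hn
  obtain ⟨r, hr, hroot⟩ := exists_sq_add_mul_add_dvd_two_pow (b := 3) (c := 4) (r₀ := 9) (j := 4)
    ⟨1, rfl⟩ (by norm_num) (by norm_num) v
  have ha : 2 ^ n ∣ a (n + (d + 1)) - a n :=
    ⟨ε * (2 ^ (d + 1) - 1), by rw [← add_assoc]; linear_combination -h⟩
  replace hr : r % 16 = 9 := hr
  exact not_two_pow_dvd_pow_sub_one hr d.add_one_ne_zero
    (two_pow_dvd_pow_sub_one (Int.odd_iff.mpr (by omega)) (by rwa [add_comm]) (by omega) ha)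

/-- If `ε = ±1` and `a n - ε·2^n = a m - ε·2^m` with `0 < n < m`,
then `2^n ≤ 8·m` (i.e. `n ≤ 3 + log m / log 2`). -/
theorem two_pow_n_le (ε : ℤ) (hε : ε = 1 ∨ ε = -1) (n m : ℕ) (hn : 0 < n) (hnm : n < m)
    (h : a n - ε * 2 ^ n = a m - ε * 2 ^ m) :
    (2 : ℤ) ^ n ≤ 8 * m :=
  two_pow_n_le_general ε n m hnm h
end

section
/- Let θ = arccos(√2/4) ∈ ℝ. Then sin θ = √(7/8), and for every natural number m, the real number a(m) equals 2^m · sin((2m+1)·θ)/sin(θ). -/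
open Real

/-- With `θ = arccos(√2/4)` one has `sin θ = √(7/8)` and
`a m = 2^m · sin((2m+1)θ) / sin θ` for every natural number `m`. -/
theorem a_eq_sin_formula (θ : ℝ) (hθ : θ = Real.arccos (Real.sqrt 2 / 4)) :
    Real.sin θ = Real.sqrt (7 / 8) ∧
      ∀ m : ℕ, (a m : ℝ) = 2 ^ m * Real.sin ((2 * m + 1) * θ) / Real.sin θ := by
  have hsq : Real.sqrt 2 ^ 2 = 2 := Real.sq_sqrt (by norm_num)
  have hle : Real.sqrt 2 / 4 ≤ 1 := by nlinarith [Real.sqrt_nonneg 2]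
  have hge : (-1:ℝ) ≤ Real.sqrt 2 / 4 := by nlinarith [Real.sqrt_nonneg 2]
  have hcos : Real.cos θ = Real.sqrt 2 / 4 := by
    rw [hθ]; exact Real.cos_arccos hge hle
  have hcos2 : Real.cos θ ^ 2 = 1/8 := by
    rw [hcos, div_pow, hsq]; norm_num
  have hsin : Real.sin θ = Real.sqrt (7/8) := by
    rw [hθ, Real.sin_arccos]
    congr 1
    rw [div_pow, hsq]; norm_num
  have hsinsq : Real.sin θ ^ 2 = 7/8 := by
    nlinarith [Real.sin_sq_add_cos_sq θ]
  have hsinpos : 0 < Real.sin θ := by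
    rw [hsin]; exact Real.sqrt_pos.mpr (by norm_num)
  have hsinne : Real.sin θ ≠ 0 := ne_of_gt hsinpos
  have hc2 : Real.cos (2*θ) = -(3/4) := by
    rw [Real.cos_two_mul, hcos2]; norm_num
  have key : ∀ x : ℝ, Real.sin ((x+5)*θ) =
      -(3/2) * Real.sin ((x+3)*θ) - Real.sin ((x+1)*θ) := by
    intro x
    have h1 : Real.sin ((x+5)*θ) =
        Real.sin ((x+3)*θ) * Real.cos (2*θ) + Real.cos ((x+3)*θ) * Real.sin (2*θ) := by
      rw [← Real.sin_add]; ring_nf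
    have h2 : Real.sin ((x+1)*θ) =
        Real.sin ((x+3)*θ) * Real.cos (2*θ) - Real.cos ((x+3)*θ) * Real.sin (2*θ) := by
      rw [← Real.sin_sub]; ring_nf
    rw [hc2] at h1 h2
    linarith
  refine ⟨hsin, ?_⟩
  have main : ∀ m : ℕ, (a m : ℝ) = 2 ^ m * Real.sin ((2 * m + 1) * θ) / Real.sin θ ∧
      (a (m+1) : ℝ) = 2 ^ (m+1) * Real.sin ((2 * (m+1) + 1) * θ) / Real.sin θ := by
    intro m
    induction m with
    | zero =>
      constructor
      · show ((1:ℤ):ℝ) = _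
        push_cast
        rw [show (2*(0:ℝ)+1)*θ = θ by ring]
        field_simp
      · show ((-1:ℤ):ℝ) = _
        push_cast
        rw [show (2*((0:ℝ)+1)+1)*θ = 3*θ by ring, Real.sin_three_mul]
        field_simp
        nlinarith [hsinsq]
    | succ n ih =>
      obtain ⟨ih1, ih2⟩ := ih
      constructor
      · push_cast
        exact ih2
      · have ha : (a (n+1+1+1) : ℝ) = -3 * (a (n+1+1) : ℝ) - 4 * (a (n+1) : ℝ) := by
          rw [show a (n+1+1+1) = -3 * a (n+1+1) - 4 * a (n+1) from rfl]; push_cast; ring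
        have ha' : (a (n+1+1) : ℝ) = -3 * (a (n+1) : ℝ) - 4 * (a n : ℝ) := by
          rw [show a (n+1+1) = -3 * a (n+1) - 4 * a n from rfl]; push_cast; ring
        push_cast
        rw [ha', ih1, ih2]
        have hk := key (2*(n:ℝ))
        rw [show (2*((n:ℝ)+1+1)+1)*θ = (2*(n:ℝ)+5)*θ by ring,
            show (2*((n:ℝ)+1)+1)*θ = (2*(n:ℝ)+3)*θ by ring, hk]
        field_simp
        ring
  exact fun m => (main m).1
end

section
/- The real number arccos(√2/4)/π is irrational; that is, θ = arccos(√2/4) is not a rational multiple of π. -/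
open Real

theorem irrational_div_pi_of_cos_eq_ratCast {θ : ℝ} {q : ℚ} (hcos : cos θ = q)
    (hq : (q : ℝ) ∉ ({-1, -1 / 2, 0, 1 / 2, 1} : Set ℝ)) : Irrational (θ / π) := by
  rintro ⟨r, hr⟩
  refine hq (hcos ▸ niven ⟨r, ?_⟩ ⟨q, hcos⟩)
  rw [hr, div_mul_cancel₀ θ pi_ne_zero]

theorem cos_two_mul_arccos_sqrt_two_div_four :
    cos (2 * arccos (√2 / 4)) = ((-3 / 4 : ℚ) : ℝ) := by
  have h2 : √2 ^ 2 = 2 := sq_sqrt zero_le_two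
  rw [cos_two_mul, cos_arccos (by nlinarith [sqrt_nonneg 2]) (by nlinarith [sqrt_nonneg 2])]
  push_cast
  linear_combination h2 / 8

/-- `θ = arccos(√2/4)` is not a rational multiple of `π`:
the quotient `arccos(√2/4)/π` is irrational. -/
theorem arccos_div_pi_irrational :
    Irrational (Real.arccos (Real.sqrt 2 / 4) / Real.pi) := by
  refine .of_natCast_mul 2 ?_
  rw [← mul_div_assoc]
  exact irrational_div_pi_of_cos_eq_ratCast cos_two_mul_arccos_sqrt_two_div_four (by norm_num)
end
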